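/- Fix integers k > ℓ ≥ 0. For n sufficiently large, the quantity D(n) = ∑_{j=0}^{k-ℓ} (-1)^{j+1} C(ℓ+1, j) C(k-ℓ-1, k-ℓ-j) C(n-k-ℓ-1, k-ℓ-j) is positive, and the ratio C(k, k-ℓ)·C(n-k, k-ℓ) / D(n), divided by n, converges to C(k, k-ℓ) / ((k-ℓ)(ℓ+1)) as n → ∞. -/

import Mathlib

open Filter Finset Topology
open scoped Nat

/-!
Since `C(n - a, i) ~ nⁱ / i!`, the `j`-th summand of `D(n)` is of order `n^(k-ℓ-j)`. The `j = 0`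
summand vanishes because `C(k-ℓ-1, k-ℓ) = 0`, so `D(n) ~ (ℓ+1) n^(k-ℓ-1) / (k-ℓ-1)!` comes from
`j = 1` alone, while the numerator is `~ C(k, k-ℓ) n^(k-ℓ) / (k-ℓ)!`.
-/

section

variable {𝕜 : Type*} [Field 𝕜] [LinearOrder 𝕜] [IsStrictOrderedRing 𝕜]
  [TopologicalSpace 𝕜] [OrderTopology 𝕜]

theorem eventually_pos_of_tendsto_div_pow {f : ℕ → 𝕜} {p : ℕ} {L : 𝕜} (hL : 0 < L)
    (h : Tendsto (fun n : ℕ => f n / (n : 𝕜) ^ p) atTop (𝓝 L)) : ∀ᶠ n in atTop, 0 < f n := by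
  filter_upwards [h.eventually (eventually_gt_nhds hL)] with n hn
  exact (div_pos_iff.1 hn).elim And.left fun h => absurd h.2 (not_lt.2 (by positivity))

theorem tendsto_div_div_natCast_of_tendsto_div_pow {f g : ℕ → 𝕜} {p : ℕ} {α β : 𝕜}
    (hf : Tendsto (fun n : ℕ => f n / (n : 𝕜) ^ (p + 1)) atTop (𝓝 α))
    (hg : Tendsto (fun n : ℕ => g n / (n : 𝕜) ^ p) atTop (𝓝 β)) (hβ : β ≠ 0) :
    Tendsto (fun n : ℕ => f n / g n / n) atTop (𝓝 (α / β)) := by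
  refine (hf.div hg hβ).congr' ?_
  filter_upwards [eventually_gt_atTop 0] with n hn
  simp only [Pi.div_apply]
  rw [pow_succ, div_mul_eq_div_div_swap, div_div_div_cancel_right₀ (by positivity), div_right_comm]

variable [Archimedean 𝕜]

theorem tendsto_const_div_natCast_atTop (c : 𝕜) :
    Tendsto (fun n : ℕ => c / (n : 𝕜)) atTop (𝓝 0) :=
  tendsto_const_nhds.div_atTop tendsto_natCast_atTop_atTop

theorem tendsto_choose_sub_div_pow (a i : ℕ) :
    Tendsto (fun n : ℕ => ((n - a).choose i : 𝕜) / (n : 𝕜) ^ i) atTop (𝓝 (i ! : 𝕜)⁻¹) := by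
  have hprod : ∀ᶠ n : ℕ in atTop, ((n - a).choose i : 𝕜) / (n : 𝕜) ^ i
      = (∏ t ∈ range i, (1 - (a + t : 𝕜) / n)) / i ! := by
    filter_upwards [eventually_ge_atTop (a + i), eventually_gt_atTop 0] with n hai hn
    have hn0 : (n : 𝕜) ≠ 0 := by positivity
    rw [eq_div_iff (by positivity), div_mul_eq_mul_div, ← Nat.cast_mul, mul_comm,
      ← Nat.descFactorial_eq_factorial_mul_choose, Nat.descFactorial_eq_prod_range,
      pow_eq_prod_const, Nat.cast_prod, ← prod_div_distrib]
    refine prod_congr rfl fun t ht => ?_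
    rw [Nat.sub_sub, Nat.cast_sub (by simp at ht; omega)]
    push_cast
    field_simp
  have hfactor (t : ℕ) : Tendsto (fun n : ℕ => 1 - (a + t : 𝕜) / n) atTop (𝓝 1) := by
    simpa using tendsto_const_nhds.sub (tendsto_const_div_natCast_atTop (a + t : 𝕜))
  rw [tendsto_congr' hprod, ← one_div]
  simpa using (tendsto_finsetProd (range i) fun t _ => hfactor t).div_const (i ! : 𝕜)

theorem tendsto_sum_mul_choose_div_pow (c : ℕ → 𝕜) (hc : c 0 = 0) (a m : ℕ) :
    Tendsto (fun n : ℕ => (∑ j ∈ range (m + 2), c j * ((n - a).choose (m + 1 - j) : 𝕜)) / n ^ m)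
      atTop (𝓝 (c 1 / m !)) := by
  have hterm : ∀ j ∈ range (m + 2), Tendsto (fun n : ℕ => c j * ((n - a).choose (m + 1 - j) : 𝕜)
      / n ^ m) atTop (𝓝 (if j = 1 then c 1 / m ! else 0)) := by
    rintro (_ | i) hi
    · simp [hc]
    have him : m - i + i = m := by simp at hi; omega
    have hsplit : ∀ᶠ n : ℕ in atTop, c (i + 1) * ((n - a).choose (m + 1 - (i + 1)) : 𝕜) / n ^ m
        = c (i + 1) * (((n - a).choose (m - i) : 𝕜) / n ^ (m - i)) * (1 / (n : 𝕜)) ^ i := by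
      filter_upwards [eventually_gt_atTop 0] with n hn
      rw [Nat.add_sub_add_right, ← him, pow_add, one_div_pow, him]
      field_simp
    have hlim := ((tendsto_choose_sub_div_pow a (m - i)).const_mul (c (i + 1))).mul
      ((tendsto_const_div_natCast_atTop (1 : 𝕜)).pow i)
    rw [tendsto_congr' hsplit]
    rcases i with _ | i
    · simpa [div_eq_mul_inv] using hlim
    · simpa using hlim
  simp_rw [sum_div]
  simpa using tendsto_finsetSum _ hterm

end

theorem lovasz_L_singleton_asymptotics (k ℓ : ℕ) (hℓk : ℓ < k) :
    (∀ᶠ n : ℕ in atTop,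
        0 < ∑ j ∈ Finset.range (k - ℓ + 1),
            (-1 : ℚ) ^ (j + 1) * ((ℓ + 1).choose j) * ((k - ℓ - 1).choose (k - ℓ - j)) *
              ((n - k - ℓ - 1).choose (k - ℓ - j))) ∧
      Tendsto
        (fun n : ℕ =>
          ((k.choose (k - ℓ) : ℚ) * ((n - k).choose (k - ℓ)) /
            (∑ j ∈ Finset.range (k - ℓ + 1),
              (-1 : ℚ) ^ (j + 1) * ((ℓ + 1).choose j) * ((k - ℓ - 1).choose (k - ℓ - j)) *
                ((n - k - ℓ - 1).choose (k - ℓ - j)))) / n)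
        atTop
        (nhds ((k.choose (k - ℓ) : ℚ) / ((k - ℓ) * (ℓ + 1)))) := by
  obtain ⟨m, hm⟩ : ∃ m, k - ℓ = m + 1 := ⟨k - ℓ - 1, by omega⟩
  have hsub (n : ℕ) : n - k - ℓ - 1 = n - (k + ℓ + 1) := by omega
  have hcast : (k : ℚ) - ℓ = m + 1 := by rw [← Nat.cast_sub hℓk.le, hm]; push_cast; rfl
  simp only [hm, Nat.add_sub_cancel, hsub, hcast]
  set c : ℕ → ℚ := fun j => (-1) ^ (j + 1) * ((ℓ + 1).choose j) * (m.choose (m + 1 - j))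
  have hc1 : c 1 = ℓ + 1 := by simp [c]
  have hD := tendsto_sum_mul_choose_div_pow c (by simp [c]) (k + ℓ + 1) m
  rw [hc1] at hD
  have hN := (tendsto_choose_sub_div_pow (𝕜 := ℚ) k (m + 1)).const_mul (k.choose (m + 1) : ℚ)
  simp only [← mul_div_assoc] at hN
  have hval : (k.choose (m + 1) : ℚ) / ((m + 1) * (ℓ + 1))
      = k.choose (m + 1) * ((m + 1)! : ℚ)⁻¹ / ((ℓ + 1) / m !) := by
    rw [Nat.factorial_succ]
    push_cast
    field_simp
  rw [hval]
  exact ⟨eventually_pos_of_tendsto_div_pow (by positivity) hD,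
    tendsto_div_div_natCast_of_tendsto_div_pow hN hD (by positivity)⟩
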